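/- arXiv:1808.05267 — 2 statements merged into one kernel-verified Lean document; each statement's English description precedes it below -/
import Mathlib

section
/- Let T be a triangulated category, S ⊆ T a pre-aisle, and t an object of T. The additive functor H_S(−,t) : Tᵒᵖ → Ab is homological: for every distinguished triangle x →α y →β z → Σx in T, the induced sequence H_S(z,t) → H_S(y,t) → H_S(x,t) is exact at H_S(y,t). -/
/-!
`H_S(-,t)` is well defined because `R(t,t')` is transitive: two relations that share a middle
representative are glued along a homotopy pushout, the cone of `b ⟶ s₁ ⊞ s₂`, which lies in `S`
since `S` is closed under extensions and suspension. Exactness at `H_S(y,t)` then comes from the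
exactness of `Hom(-, s)` on the triangle: if `(α ≫ f, g)` is equivalent to zero via `u`, then
`f ≫ u` vanishes on `α`, hence factors through `β`.
-/

open CategoryTheory CategoryTheory.Limits CategoryTheory.Pretriangulated ZeroObject

universe v u

variable {C : Type u} [Category.{v} C] [Preadditive C] [HasZeroObject C]
  [HasShift C ℤ] [∀ n : ℤ, (CategoryTheory.shiftFunctor C n).Additive] [Pretriangulated C]
  [IsTriangulated C]

/-- A pre-aisle in a triangulated category: a full additive subcategory closed under
suspension, extensions and direct summands. -/
structure IsPreaisle (S : Set C) : Prop where
  zero_mem : (0 : C) ∈ S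
  shift_mem : ∀ s ∈ S, (s⟦(1 : ℤ)⟧ : C) ∈ S
  ext_mem : ∀ T : Triangle C, T ∈ (distTriang C) → T.obj₁ ∈ S → T.obj₃ ∈ S → T.obj₂ ∈ S
  summand_mem : ∀ x s : C, s ∈ S → ∀ (i : x ⟶ s) (r : s ⟶ x), i ≫ r = 𝟙 x → x ∈ S

/-- The class `H̃_S(t,t')` of pairs of composable morphisms `t ⟶ s ⟶ t'` with `s ∈ S`. -/
structure HTilde (S : Set C) (t t' : C) where
  s : C
  mem : s ∈ S
  f : t ⟶ s
  g : s ⟶ t'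

/-- The relation `R(t,t')` on `H̃_S(t,t')`. -/
def HRel (S : Set C) {t t' : C} (h h' : HTilde S t t') : Prop :=
  ∃ (s'' : C) (_ : s'' ∈ S) (u : h.s ⟶ s'') (u' : h'.s ⟶ s'') (v : s'' ⟶ t'),
    h.f ≫ u = h'.f ≫ u' ∧ u ≫ v = h.g ∧ u' ≫ v = h'.g

/-- The quotient `H_S(t,t')` of `H̃_S(t,t')` by the equivalence relation `R(t,t')`. -/
def HQuot (S : Set C) (t t' : C) := Quot (HRel S (t := t) (t' := t'))

section Category

omit [Preadditive C] [HasZeroObject C] [HasShift C ℤ]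
  [∀ n : ℤ, (CategoryTheory.shiftFunctor C n).Additive] [Pretriangulated C] [IsTriangulated C]

variable {S : Set C} {x y t t' : C}

lemma HRel.refl (h : HTilde S t t') : HRel S h h :=
  ⟨h.s, h.mem, 𝟙 _, 𝟙 _, h.g, rfl, Category.id_comp _, Category.id_comp _⟩

lemma HRel.symm {h h' : HTilde S t t'} : HRel S h h' → HRel S h' h
  | ⟨s, hs, u, u', v, hf, hg, hg'⟩ => ⟨s, hs, u', u, v, hf.symm, hg', hg⟩

def HTilde.precomp (e : x ⟶ y) (h : HTilde S y t) : HTilde S x t :=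
  ⟨h.s, h.mem, e ≫ h.f, h.g⟩

lemma HRel.precomp (e : x ⟶ y) {h h' : HTilde S y t} :
    HRel S h h' → HRel S (h.precomp e) (h'.precomp e)
  | ⟨s, hs, u, u', v, hf, hg, hg'⟩ =>
    ⟨s, hs, u, u', v, by simp only [HTilde.precomp, Category.assoc, hf], hg, hg'⟩

def HQuot.precomp (e : x ⟶ y) : HQuot S y t → HQuot S x t :=
  Quot.map (HTilde.precomp e) fun _ _ => HRel.precomp e

lemma HQuot.precomp_mk (e : x ⟶ y) (h : HTilde S y t) :
    HQuot.precomp e (Quot.mk _ h) = Quot.mk _ (h.precomp e) :=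
  rfl

end Category

section Preadditive

omit [HasShift C ℤ] [∀ n : ℤ, (CategoryTheory.shiftFunctor C n).Additive] [Pretriangulated C]
  [IsTriangulated C]

variable {S : Set C} {x y z t : C}

lemma HQuot.precomp_precomp_of_comp_eq_zero (h₀ : (0 : C) ∈ S) {e₁ : x ⟶ y} {e₂ : y ⟶ z}
    (he : e₁ ≫ e₂ = 0) (q : HQuot S z t) :
    HQuot.precomp e₁ (HQuot.precomp e₂ q) = Quot.mk _ ⟨0, h₀, 0, 0⟩ := by
  induction q using Quot.ind with
  | mk h =>
    exact Quot.sound ⟨h.s, h.mem, 𝟙 _, 0, h.g,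
      by simp [HTilde.precomp, reassoc_of% he], Category.id_comp _, zero_comp⟩

end Preadditive

section Pretriangulated

omit [IsTriangulated C]

namespace IsPreaisle

variable {S : Set C} (hS : IsPreaisle S)
include hS

lemma biprod_mem {s₁ s₂ : C} (h₁ : s₁ ∈ S) (h₂ : s₂ ∈ S) : (s₁ ⊞ s₂ : C) ∈ S :=
  hS.ext_mem _ (binaryBiproductTriangle_distinguished s₁ s₂) h₁ h₂

lemma exists_weakPushout {b s₁ s₂ : C} (hb : b ∈ S) (h₁ : s₁ ∈ S) (h₂ : s₂ ∈ S)
    (f₁ : b ⟶ s₁) (f₂ : b ⟶ s₂) :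
    ∃ (p : C) (_ : p ∈ S) (i₁ : s₁ ⟶ p) (i₂ : s₂ ⟶ p), f₁ ≫ i₁ = f₂ ≫ i₂ ∧
      ∀ {t : C} (g₁ : s₁ ⟶ t) (g₂ : s₂ ⟶ t), f₁ ≫ g₁ = f₂ ≫ g₂ →
        ∃ g : p ⟶ t, i₁ ≫ g = g₁ ∧ i₂ ≫ g = g₂ := by
  obtain ⟨p, π, δ, hdist⟩ := distinguished_cocone_triangle (biprod.lift f₁ (-f₂))
  have hp : p ∈ S :=
    hS.ext_mem _ (rot_of_distTriang _ hdist) (hS.biprod_mem h₁ h₂) (hS.shift_mem _ hb)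
  refine ⟨p, hp, biprod.inl ≫ π, biprod.inr ≫ π, ?_, fun g₁ g₂ hg => ?_⟩
  · have hπ : biprod.lift f₁ (-f₂) ≫ π = 0 := comp_distTriang_mor_zero₁₂ _ hdist
    rw [biprod.lift_eq, Preadditive.add_comp, Preadditive.neg_comp, Preadditive.neg_comp,
      ← sub_eq_add_neg, sub_eq_zero] at hπ
    simpa only [Category.assoc] using hπ
  · obtain ⟨g, hg⟩ : ∃ g : p ⟶ _, biprod.desc g₁ g₂ = π ≫ g :=
      Triangle.yoneda_exact₂ _ hdist _ (by
        change biprod.lift f₁ (-f₂) ≫ biprod.desc g₁ g₂ = 0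
        rw [biprod.lift_desc, Preadditive.neg_comp, hg, add_neg_cancel])
    exact ⟨g, by simp [← hg], by simp [← hg]⟩

end IsPreaisle

variable {S : Set C} {x t t' : C}

lemma HRel.trans (hS : IsPreaisle S) {a b c : HTilde S t t'} :
    HRel S a b → HRel S b c → HRel S a c := by
  rintro ⟨s₁, m₁, u, u', v, e₁, e₂, e₃⟩ ⟨s₂, m₂, w, w', v', f₁, f₂, f₃⟩
  obtain ⟨p, hp, i₁, i₂, hcomm, hdesc⟩ := hS.exists_weakPushout b.mem m₁ m₂ u' w
  obtain ⟨g, hg₁, hg₂⟩ := hdesc v v' (e₃.trans f₂.symm)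
  refine ⟨p, hp, u ≫ i₁, w' ≫ i₂, g, ?_, ?_, ?_⟩
  · rw [reassoc_of% e₁, hcomm, reassoc_of% f₁]
  · rw [Category.assoc, hg₁, e₂]
  · rw [Category.assoc, hg₂, f₃]

lemma HRel.equivalence (hS : IsPreaisle S) (t t' : C) :
    Equivalence (HRel S (t := t) (t' := t')) :=
  ⟨HRel.refl, HRel.symm, HRel.trans hS⟩

lemma HQuot.mk_eq_zero_iff (hS : IsPreaisle S) (h : HTilde S x t) :
    (Quot.mk _ h : HQuot S x t) = Quot.mk _ ⟨0, hS.zero_mem, 0, 0⟩ ↔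
      ∃ (s : C) (_ : s ∈ S) (u : h.s ⟶ s) (v : s ⟶ t), h.f ≫ u = 0 ∧ u ≫ v = h.g := by
  rw [Quot.eq, (HRel.equivalence hS x t).eqvGen_iff]
  constructor
  · rintro ⟨s, hs, u, _, v, hf, hg, -⟩
    exact ⟨s, hs, u, v, by simpa using hf, hg⟩
  · rintro ⟨s, hs, u, v, hf, hg⟩
    exact ⟨s, hs, u, 0, v, by simpa using hf, hg, zero_comp⟩

end Pretriangulated

/-- the functor `H_S(-,t)` is homological: for every distinguished triangle
`x ⟶ y ⟶ z ⟶ Σx`, the sequence `H_S(z,t) ⟶ H_S(y,t) ⟶ H_S(x,t)` is exact at `H_S(y,t)`: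
the image of the map induced by `β : y ⟶ z` is the kernel of the map induced by
`α : x ⟶ y`. -/
theorem statement5 (S : Set C) (hS : IsPreaisle S) (t : C)
    (T : Triangle C) (hT : T ∈ (distTriang C)) :
    ∃ (mapα : HQuot S T.obj₂ t → HQuot S T.obj₁ t)
      (mapβ : HQuot S T.obj₃ t → HQuot S T.obj₂ t),
      -- the two maps are induced by precomposition of representatives with `α` and `β`
      (∀ h : HTilde S T.obj₂ t,
        mapα (Quot.mk _ h) = Quot.mk _ ⟨h.s, h.mem, T.mor₁ ≫ h.f, h.g⟩) ∧
      (∀ h : HTilde S T.obj₃ t,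
        mapβ (Quot.mk _ h) = Quot.mk _ ⟨h.s, h.mem, T.mor₂ ≫ h.f, h.g⟩) ∧
      -- exactness at `H_S(y,t)`
      (∀ q : HQuot S T.obj₂ t,
        mapα q = Quot.mk _ ⟨0, hS.zero_mem, 0, 0⟩ ↔ ∃ p, mapβ p = q) := by
  refine ⟨HQuot.precomp T.mor₁, HQuot.precomp T.mor₂, fun _ => rfl, fun _ => rfl,
    fun q => ⟨?_, ?_⟩⟩
  · induction q using Quot.ind with
    | mk h =>
      intro hzero
      obtain ⟨s, hs, u, v, hu, hv⟩ := (HQuot.mk_eq_zero_iff hS _).mp hzero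
      obtain ⟨k, hk⟩ := Triangle.yoneda_exact₂ _ hT (h.f ≫ u)
        ((Category.assoc _ _ _).symm.trans hu)
      exact ⟨Quot.mk _ ⟨s, hs, k, v⟩,
        Quot.sound ⟨s, hs, 𝟙 s, u, v, by simp [HTilde.precomp, hk], Category.id_comp _, hv⟩⟩
  · rintro ⟨p, rfl⟩
    exact HQuot.precomp_precomp_of_comp_eq_zero hS.zero_mem (comp_distTriang_mor_zero₁₂ _ hT) p
end

section
/- Let T be a well generated triangulated category and S ⊆ T a set of objects, and put 𝒮 = ⟨S⟩^{≤0}. Then for every pair of objects x, t of T, the class H_𝒮(x,t) is a (small) set: choosing a regular cardinal α with T α-compactly generated and S ∪ {x} ⊆ T^α, every class in H_𝒮(x,t) is represented by a pair x → s' → t with s' ∈ S(α), and two such representatives x →f s →g t and x →f' s' →g' t with s, s' ∈ S(α) are equivalent if and only if they can be connected by a commutative diagram through an object s'' ∈ S(α). -/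
open CategoryTheory CategoryTheory.Limits CategoryTheory.Pretriangulated ZeroObject

universe v u

variable {C : Type u} [Category.{v} C] [Preadditive C] [HasZeroObject C]
  [HasShift C ℤ] [∀ n : ℤ, (CategoryTheory.shiftFunctor C n).Additive] [Pretriangulated C]
  [IsTriangulated C] [HasCoproducts.{v} C]

/-- A cocomplete pre-aisle: a pre-aisle that is moreover closed under all coproducts. -/
def IsCocompletePreaisle (S : Set C) : Prop :=
  IsPreaisle S ∧ ∀ {ι : Type v} (xs : ι → C), (∀ i, xs i ∈ S) → (∐ xs : C) ∈ S

/-- `⟨S⟩^{≤0}`: the smallest cocomplete pre-aisle containing `S`. -/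
def aisleGen (S : Set C) : Set C :=
  ⋂₀ {P : Set C | IsCocompletePreaisle P ∧ S ⊆ P}

/-- `A * B`: the class of objects `y` fitting in a distinguished triangle `a ⟶ y ⟶ b ⟶ Σa`
with `a ∈ A` and `b ∈ B`. -/
def starSet (A B : Set C) : Set C :=
  {y | ∃ (a : C) (_ : a ∈ A) (b : C) (_ : b ∈ B) (f : a ⟶ y) (g : y ⟶ b)
    (h : b ⟶ (a⟦(1 : ℤ)⟧ : C)), Triangle.mk f g h ∈ (distTriang C)}

/-- The class of coproducts of fewer than `α` objects of `A`. -/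
def smallCoprodSet (α : Cardinal.{v}) (A : Set C) : Set C :=
  {y | ∃ (ι : Type v) (_ : Cardinal.mk ι < α) (xs : ι → C) (_ : ∀ i, xs i ∈ A),
    Nonempty ((∐ xs : C) ≅ y)}

/-- The class `∪_{j ≥ 0} Σʲ S` of all nonnegative suspensions of objects of `S`. -/
def suspSet (S : Set C) : Set C :=
  {y | ∃ (j : ℕ) (x : C), x ∈ S ∧ y = (x⟦(j : ℤ)⟧ : C)}

/-- Construction 2.1, by transfinite induction (with the indexing shifted by one:
`SClass α S 0` is the paper's `S(1)`): the base stage consists of the coproducts of fewer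
than `α` objects of `∪_j Σʲ S`; the stage at a successor consists of the coproducts of
fewer than `α` objects of `S(i) * S(i)`; and the stage at a limit ordinal is the union of
the earlier stages. -/
noncomputable def SClass (α : Cardinal.{v}) (S : Set C) (i : Ordinal.{v}) : Set C :=
  Ordinal.limitRecOn i (smallCoprodSet α (suspSet S))
    (fun _ prev => smallCoprodSet α (starSet prev prev))
    (fun o _ ih => {y | ∃ (o' : Ordinal.{v}) (h : o' < o), y ∈ ih o' h})

/-- The paper's `S(α)`: the stage of Construction 2.1 at the ordinal `α`. -/
noncomputable def SAlpha (α : Cardinal.{v}) (S : Set C) : Set C :=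
  SClass α S (Cardinal.ord α)

/-- Data exhibiting the triangulated category `C` as `α`-compactly generated, `compacts`
playing the role of the subcategory `T^α` of `α`-compact objects: an essentially small
triangulated subcategory, closed under coproducts of fewer than `α` objects, generating,
and such that any morphism from one of its objects to a coproduct factors through a
sub-coproduct of fewer than `α` of the summands via `α`-compact intermediaries. -/
structure AlphaCompactGeneration (α : Cardinal.{v}) where
  compacts : Set C
  zero_mem : (0 : C) ∈ compacts
  iso_mem : ∀ x y : C, x ∈ compacts → (x ≅ y) → y ∈ compacts
  shift_mem : ∀ x ∈ compacts, ∀ n : ℤ, (x⟦n⟧ : C) ∈ compacts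
  cone_mem : ∀ T : Triangle C, T ∈ (distTriang C) → T.obj₁ ∈ compacts →
    T.obj₂ ∈ compacts → T.obj₃ ∈ compacts
  smallCoprod_mem : ∀ {ι : Type v}, Cardinal.mk ι < α → ∀ xs : ι → C,
    (∀ i, xs i ∈ compacts) → (∐ xs : C) ∈ compacts
  essentiallySmall : ∃ (ι : Type v) (f : ι → C), ∀ x ∈ compacts, ∃ i, Nonempty (x ≅ f i)
  factor : ∀ t ∈ compacts, ∀ {ι : Type v} (xs : ι → C) (f : t ⟶ ∐ xs),
    ∃ (J : Set ι) (_ : Cardinal.mk J < α) (ts : ι → C) (_ : ∀ i, ts i ∈ compacts)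
      (_ : ∀ i ∉ J, IsZero (ts i)) (g : t ⟶ ∐ ts) (fs : ∀ i, ts i ⟶ xs i),
      f = g ≫ Limits.Sigma.map fs
  generating : ∀ x : C, (∀ t ∈ compacts, ∀ f : t ⟶ x, f = 0) → IsZero x

/-!
Let `P` be the class of objects `y` such that every morphism from an `α`-compact object to `y`
factors through `S(α)`. The class `S(α)` consists of `α`-compact objects and is closed under
`Σ`, extensions and coproducts of fewer than `α` objects (regularity of `α` bounds the stages
needed). From this, `P` is a cocomplete pre-aisle containing `S`: extensions are handled by an
octahedron, coproducts by the `α`-factorization property of `α`-compact objects. Hence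
`⟨S⟩^{≤0} ⊆ P`, so every `x ⟶ s ⟶ t` is equivalent to one through `S(α)`; smallness follows as
the `α`-compacts are essentially small. For the relation: `(f, -f') : x ⟶ s ⊞ s'` dies in `s''`,
and factoring the induced map out of its cone through `S(α)` moves `s''` into `S(α)`.
-/

section

omit [IsTriangulated C]

section

omit [HasCoproducts C]

variable {A B : Set C}

lemma IsPreaisle.mem_of_iso {P : Set C} (hP : IsPreaisle P) {x y : C} (e : x ≅ y)
    (hx : x ∈ P) : y ∈ P :=
  hP.summand_mem y x hx e.inv e.hom e.inv_hom_id

lemma IsPreaisle.shift_nat_mem {P : Set C} (hP : IsPreaisle P) {x : C} (hx : x ∈ P) (j : ℕ) :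
    (x⟦(j : ℤ)⟧ : C) ∈ P := by
  induction j with
  | zero => exact hP.mem_of_iso ((shiftFunctorZero' C (((0 : ℕ) : ℤ)) rfl).app x).symm hx
  | succ j ih =>
      exact hP.mem_of_iso
        ((shiftFunctorAdd' C (j : ℤ) 1 ((j + 1 : ℕ) : ℤ) (by push_cast; rfl)).app x).symm
        (hP.shift_mem _ ih)

lemma mem_starSet {T : Triangle C} (hT : T ∈ distTriang C) (h₁ : T.obj₁ ∈ A)
    (h₃ : T.obj₃ ∈ B) : T.obj₂ ∈ starSet A B :=
  ⟨T.obj₁, h₁, T.obj₃, h₃, T.mor₁, T.mor₂, T.mor₃, hT⟩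

lemma mem_starSet_of_mem (h₀ : (0 : C) ∈ B) {a : C} (ha : a ∈ A) : a ∈ starSet A B :=
  mem_starSet (contractible_distinguished a) ha h₀

lemma starSet_shift (hA : ∀ a ∈ A, (a⟦(1 : ℤ)⟧ : C) ∈ A)
    (hB : ∀ b ∈ B, (b⟦(1 : ℤ)⟧ : C) ∈ B) {z : C} (hz : z ∈ starSet A B) :
    (z⟦(1 : ℤ)⟧ : C) ∈ starSet A B :=
  let ⟨a, ha, b, hb, f, g, h, hT⟩ := hz
  mem_starSet (Triangle.shift_distinguished (Triangle.mk f g h) hT 1) (hA a ha) (hB b hb)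

end

lemma aisleGen_subset {S P : Set C} (hP : IsCocompletePreaisle P) (hSP : S ⊆ P) :
    aisleGen S ⊆ P :=
  Set.sInter_subset_of_mem ⟨hP, hSP⟩

lemma subset_aisleGen (S : Set C) : S ⊆ aisleGen S :=
  Set.subset_sInter fun _ hP => hP.2

lemma isCocompletePreaisle_aisleGen (S : Set C) : IsCocompletePreaisle (aisleGen S) := by
  refine ⟨⟨?_, ?_, ?_, ?_⟩, ?_⟩
  · exact fun P hP => hP.1.1.zero_mem
  · exact fun s hs P hP => hP.1.1.shift_mem s (hs P hP)
  · exact fun T hT h₁ h₃ P hP => hP.1.1.ext_mem T hT (h₁ P hP) (h₃ P hP)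
  · exact fun x s hs i r hir P hP => hP.1.1.summand_mem x s (hs P hP) i r hir
  · exact fun xs hxs P hP => hP.1.2 xs fun i => hxs i P hP

lemma AlphaCompactGeneration.mem_of_distTriang {α : Cardinal.{v}}
    (G : AlphaCompactGeneration (C := C) α) {T : Triangle C} (hT : T ∈ distTriang C)
    (h₁ : T.obj₁ ∈ G.compacts) (h₃ : T.obj₃ ∈ G.compacts) : T.obj₂ ∈ G.compacts :=
  G.cone_mem T.invRotate (inv_rot_of_distTriang T hT) (G.shift_mem _ h₃ (-1)) h₁

variable {α : Cardinal.{v}} {S A B : Set C}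

section

omit [Preadditive C] [HasZeroObject C] [HasShift C ℤ] [∀ n : ℤ, (shiftFunctor C n).Additive]
  [Pretriangulated C]

lemma mem_smallCoprodSet_of_iso {a b : C} (e : a ≅ b) (ha : a ∈ smallCoprodSet α A) :
    b ∈ smallCoprodSet α A :=
  let ⟨ι, hι, xs, hxs, ⟨e'⟩⟩ := ha
  ⟨ι, hι, xs, hxs, ⟨e' ≪≫ e⟩⟩

lemma mem_smallCoprodSet_of_mem (hα : 1 < α) {a : C} (ha : a ∈ A) :
    a ∈ smallCoprodSet α A :=
  ⟨PUnit, by rwa [Cardinal.mk_punit], fun _ => a, fun _ => ha, ⟨coproductUniqueIso _⟩⟩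

end

lemma zero_mem_smallCoprodSet (hα : 0 < α) : (0 : C) ∈ smallCoprodSet α A := by
  have hzero : IsZero (∐ (fun i : PEmpty.{v + 1} => i.elim) : C) := by
    rw [IsZero.iff_id_eq_zero]
    exact colimit.hom_ext fun ⟨i⟩ => i.elim
  exact ⟨PEmpty, by rwa [Cardinal.mk_pempty], _, fun i => i.elim, ⟨hzero.isoZero⟩⟩

lemma SClass_zero (α : Cardinal.{v}) (S : Set C) :
    SClass α S 0 = smallCoprodSet α (suspSet S) :=
  Ordinal.limitRecOn_zero _ _ _

lemma SClass_add_one (α : Cardinal.{v}) (S : Set C) (o : Ordinal.{v}) :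
    SClass α S (o + 1) = smallCoprodSet α (starSet (SClass α S o) (SClass α S o)) :=
  Ordinal.limitRecOn_add_one _ _ _ _

lemma SClass_limit (α : Cardinal.{v}) (S : Set C) {o : Ordinal.{v}} (h : Order.IsSuccLimit o) :
    SClass α S o = {y | ∃ (o' : Ordinal.{v}) (_ : o' < o), y ∈ SClass α S o'} := by
  rw [SClass, Ordinal.limitRecOn_limit _ _ _ _ h]
  rfl

lemma mem_SClass_of_iso {o : Ordinal.{v}} {a b : C} (e : a ≅ b) (ha : a ∈ SClass α S o) :
    b ∈ SClass α S o := by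
  induction o using Ordinal.limitRecOn with
  | zero => rw [SClass_zero] at ha ⊢; exact mem_smallCoprodSet_of_iso e ha
  | add_one o _ =>
      rw [SClass_add_one] at ha ⊢
      exact mem_smallCoprodSet_of_iso e ha
  | limit o ho ih =>
      rw [SClass_limit α S ho] at ha ⊢
      obtain ⟨o', ho', ha⟩ := ha
      exact ⟨o', ho', ih o' ho' ha⟩

lemma zero_mem_SClass (hα : 0 < α) (o : Ordinal.{v}) : (0 : C) ∈ SClass α S o := by
  induction o using Ordinal.limitRecOn with
  | zero => rw [SClass_zero]; exact zero_mem_smallCoprodSet hα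
  | add_one o _ => rw [SClass_add_one]; exact zero_mem_smallCoprodSet hα
  | limit o ho ih => rw [SClass_limit α S ho]; exact ⟨0, ho.pos, ih 0 ho.pos⟩

lemma SClass_subset_add_one (hα : 1 < α) (o : Ordinal.{v}) :
    SClass α S o ⊆ SClass α S (o + 1) := fun y hy => by
  rw [SClass_add_one]
  exact mem_smallCoprodSet_of_mem hα
    (mem_starSet_of_mem (zero_mem_SClass (zero_lt_one.trans hα) o) hy)

lemma SClass_mono (hα : 1 < α) {o o' : Ordinal.{v}} (h : o ≤ o') :
    SClass α S o ⊆ SClass α S o' := by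
  induction o' using Ordinal.limitRecOn with
  | zero => rw [nonpos_iff_eq_zero.1 h]
  | add_one a ih =>
      rcases h.eq_or_lt with rfl | hlt
      · exact subset_rfl
      · exact (ih (Order.lt_add_one_iff.1 hlt)).trans (SClass_subset_add_one hα a)
  | limit a ha _ =>
      rcases h.eq_or_lt with rfl | hlt
      · exact subset_rfl
      · rw [SClass_limit α S ha]
        exact fun y hy => ⟨o, hlt, hy⟩

lemma SClass_shift {o : Ordinal.{v}} {y : C} (hy : y ∈ SClass α S o) :
    (y⟦(1 : ℤ)⟧ : C) ∈ SClass α S o := by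
  induction o using Ordinal.limitRecOn generalizing y with
  | zero =>
      rw [SClass_zero] at hy ⊢
      obtain ⟨ι, hι, xs, hxs, ⟨e⟩⟩ := hy
      choose j z hz hze using hxs
      refine ⟨ι, hι, fun i => ((z i)⟦((j i + 1 : ℕ) : ℤ)⟧ : C),
        fun i => ⟨j i + 1, z i, hz i, rfl⟩, ⟨?_⟩⟩
      refine Sigma.mapIso (fun i =>
          (shiftFunctorAdd' C (j i : ℤ) 1 ((j i + 1 : ℕ) : ℤ) (by push_cast; rfl)).app (z i) ≪≫
            eqToIso (by rw [hze i]; rfl)) ≪≫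
        (PreservesCoproduct.iso (shiftFunctor C (1 : ℤ)) xs).symm ≪≫
        (shiftFunctor C (1 : ℤ)).mapIso e
  | add_one o ih =>
      rw [SClass_add_one] at hy ⊢
      obtain ⟨ι, hι, xs, hxs, ⟨e⟩⟩ := hy
      exact ⟨ι, hι, fun i => ((xs i)⟦(1 : ℤ)⟧ : C),
        fun i => starSet_shift (fun _ ha => ih ha) (fun _ hb => ih hb) (hxs i),
        ⟨(PreservesCoproduct.iso (shiftFunctor C (1 : ℤ)) xs).symm ≪≫
          (shiftFunctor C (1 : ℤ)).mapIso e⟩⟩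
  | limit o ho ih =>
      rw [SClass_limit α S ho] at hy ⊢
      obtain ⟨o', ho', hy⟩ := hy
      exact ⟨o', ho', ih o' ho' hy⟩

lemma SClass_subset_compacts (G : AlphaCompactGeneration (C := C) α) (hS : S ⊆ G.compacts)
    (o : Ordinal.{v}) : SClass α S o ⊆ G.compacts := by
  induction o using Ordinal.limitRecOn with
  | zero =>
      rw [SClass_zero]
      rintro y ⟨ι, hι, xs, hxs, ⟨e⟩⟩
      refine G.iso_mem _ _ (G.smallCoprod_mem hι xs fun i => ?_) e
      obtain ⟨j, z, hz, hxz⟩ := hxs i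
      rw [hxz]
      exact G.shift_mem z (hS hz) _
  | add_one o ih =>
      rw [SClass_add_one]
      rintro y ⟨ι, hι, xs, hxs, ⟨e⟩⟩
      refine G.iso_mem _ _ (G.smallCoprod_mem hι xs fun i => ?_) e
      obtain ⟨a, ha, b, hb, f, g, h, hT⟩ := hxs i
      exact G.mem_of_distTriang hT (ih ha) (ih hb)
  | limit o ho ih =>
      rw [SClass_limit α S ho]
      rintro y ⟨o', ho', hy⟩
      exact ih o' ho' hy

lemma SClass_subset_of_isCocompletePreaisle {P : Set C} (hP : IsCocompletePreaisle P)
    (hSP : S ⊆ P) (o : Ordinal.{v}) : SClass α S o ⊆ P := by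
  induction o using Ordinal.limitRecOn with
  | zero =>
      rw [SClass_zero]
      rintro y ⟨ι, hι, xs, hxs, ⟨e⟩⟩
      refine hP.1.mem_of_iso e (hP.2 xs fun i => ?_)
      obtain ⟨j, z, hz, hxz⟩ := hxs i
      rw [hxz]
      exact hP.1.shift_nat_mem (hSP hz) j
  | add_one o ih =>
      rw [SClass_add_one]
      rintro y ⟨ι, hι, xs, hxs, ⟨e⟩⟩
      refine hP.1.mem_of_iso e (hP.2 xs fun i => ?_)
      obtain ⟨a, ha, b, hb, f, g, h, hT⟩ := hxs i
      exact hP.1.ext_mem _ hT (ih ha) (ih hb)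
  | limit o ho ih =>
      rw [SClass_limit α S ho]
      rintro y ⟨o', ho', hy⟩
      exact ih o' ho' hy

structure IsAlphaCocompleteSuspended (α : Cardinal.{v}) (A : Set C) : Prop where
  zero_mem : (0 : C) ∈ A
  iso_mem : ∀ {a b : C}, (a ≅ b) → a ∈ A → b ∈ A
  shift_mem : ∀ a ∈ A, (a⟦(1 : ℤ)⟧ : C) ∈ A
  ext_mem : ∀ T ∈ distTriang C, T.obj₁ ∈ A → T.obj₃ ∈ A → T.obj₂ ∈ A
  smallCoprod_mem : ∀ {ι : Type v}, Cardinal.mk ι < α → ∀ xs : ι → C,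
    (∀ i, xs i ∈ A) → (∐ xs : C) ∈ A

lemma mem_SAlpha_iff (hα : Cardinal.aleph0 ≤ α) {y : C} :
    y ∈ SAlpha α S ↔ ∃ o < α.ord, y ∈ SClass α S o := by
  rw [SAlpha, SClass_limit α S (Cardinal.isSuccLimit_ord hα)]
  exact exists_congr fun _ => exists_prop

lemma isAlphaCocompleteSuspended_SAlpha (hα : α.IsRegular) (S : Set C) :
    IsAlphaCocompleteSuspended α (SAlpha α S) := by
  have hlim := Cardinal.isSuccLimit_ord hα.aleph0_le
  have hone : 1 < α := Cardinal.one_lt_aleph0.trans_le hα.aleph0_le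
  refine ⟨zero_mem_SClass (zero_lt_one.trans hone) _, mem_SClass_of_iso, fun _ => SClass_shift,
    fun T hT h₁ h₃ => ?_, fun {ι} hι xs hxs => ?_⟩
  · obtain ⟨o₁, ho₁, h₁⟩ := (mem_SAlpha_iff hα.aleph0_le).1 h₁
    obtain ⟨o₃, ho₃, h₃⟩ := (mem_SAlpha_iff hα.aleph0_le).1 h₃
    refine (mem_SAlpha_iff hα.aleph0_le).2
      ⟨max o₁ o₃ + 1, hlim.add_one_lt (max_lt ho₁ ho₃), ?_⟩
    rw [SClass_add_one]
    exact mem_smallCoprodSet_of_mem hone (mem_starSet hT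
      (SClass_mono hone (le_max_left o₁ o₃) h₁) (SClass_mono hone (le_max_right o₁ o₃) h₃))
  · choose os hos hmem using fun i => (mem_SAlpha_iff hα.aleph0_le).1 (hxs i)
    -- regularity of `α`: fewer than `α` stages below `α.ord` are bounded below `α.ord`
    have hsup : iSup os < α.ord := Ordinal.iSup_lt_of_lt_cof (by rwa [hα.cof_ord]) hos
    refine (mem_SAlpha_iff hα.aleph0_le).2 ⟨iSup os + 1, hlim.add_one_lt hsup, ?_⟩
    rw [SClass_add_one]
    exact ⟨ι, hι, xs, fun i => mem_starSet_of_mem (zero_mem_SClass (zero_lt_one.trans hone) _)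
      (SClass_mono hone (Ordinal.le_iSup os i) (hmem i)), ⟨Iso.refl _⟩⟩

lemma subset_SAlpha (hα : Cardinal.aleph0 ≤ α) : S ⊆ SAlpha α S := fun y hy => by
  refine (mem_SAlpha_iff hα).2 ⟨0, (Cardinal.isSuccLimit_ord hα).pos, ?_⟩
  rw [SClass_zero]
  exact mem_smallCoprodSet_of_iso ((shiftFunctorZero' C ((0 : ℕ) : ℤ) rfl).app y)
    (mem_smallCoprodSet_of_mem (Cardinal.one_lt_aleph0.trans_le hα) ⟨0, y, hy, rfl⟩)

lemma SAlpha_subset_aisleGen : SAlpha α S ⊆ aisleGen S :=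
  SClass_subset_of_isCocompletePreaisle (isCocompletePreaisle_aisleGen S) (subset_aisleGen S) _

lemma SAlpha_subset_compacts (G : AlphaCompactGeneration (C := C) α) (hS : S ⊆ G.compacts) :
    SAlpha α S ⊆ G.compacts :=
  SClass_subset_compacts G hS _

def compactMapsFactorThrough (G : AlphaCompactGeneration (C := C) α) (A : Set C) : Set C :=
  {y | ∀ c ∈ G.compacts, ∀ φ : c ⟶ y, ∃ s ∈ A, ∃ (w : c ⟶ s) (p : s ⟶ y), φ = w ≫ p}

namespace compactMapsFactorThrough

variable {G : AlphaCompactGeneration (C := C) α}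

lemma of_mem {y : C} (hy : y ∈ A) : y ∈ compactMapsFactorThrough G A :=
  fun _ _ φ => ⟨y, hy, φ, 𝟙 y, (Category.comp_id φ).symm⟩

lemma summand_mem {x s : C} (hs : s ∈ compactMapsFactorThrough G A) (i : x ⟶ s) (r : s ⟶ x)
    (hir : i ≫ r = 𝟙 x) : x ∈ compactMapsFactorThrough G A := by
  intro c hc φ
  obtain ⟨σ, hσ, w, p, hfac⟩ := hs c hc (φ ≫ i)
  refine ⟨σ, hσ, w, p ≫ r, ?_⟩
  rw [← Category.assoc, ← hfac, Category.assoc, hir, Category.comp_id]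

lemma shift_mem (hA : ∀ a ∈ A, (a⟦(1 : ℤ)⟧ : C) ∈ A) {y : C}
    (hy : y ∈ compactMapsFactorThrough G A) :
    (y⟦(1 : ℤ)⟧ : C) ∈ compactMapsFactorThrough G A := by
  intro c hc φ
  -- transport along the adjunction `Σ⁻¹ ⊣ Σ`
  let adj := (shiftEquiv C (1 : ℤ)).symm.toAdjunction
  obtain ⟨s, hs, w, p, hfac⟩ := hy _ (G.shift_mem c hc (-1)) ((adj.homEquiv _ _).symm φ)
  refine ⟨_, hA s hs, adj.homEquiv _ _ w, p⟦(1 : ℤ)⟧', ?_⟩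
  rw [← Equiv.apply_symm_apply (adj.homEquiv _ _) φ, hfac]
  exact adj.homEquiv_naturality_right w p

lemma coprod_mem (hA : ∀ {ι : Type v}, Cardinal.mk ι < α → ∀ xs : ι → C,
      (∀ i, xs i ∈ A) → (∐ xs : C) ∈ A)
    {ι : Type v} (xs : ι → C) (hxs : ∀ i, xs i ∈ compactMapsFactorThrough G A) :
    (∐ xs : C) ∈ compactMapsFactorThrough G A := by
  classical
  intro c hc φ
  obtain ⟨J, hJ, ts, hts, htsz, g, fs, rfl⟩ := G.factor c hc xs φ
  choose σ hσ w q hwq using fun j : J => hxs j (ts j) (hts j) (fs j)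
  refine ⟨∐ σ, hA hJ σ hσ,
    g ≫ Sigma.desc fun i => if hi : i ∈ J then w ⟨i, hi⟩ ≫ Sigma.ι σ ⟨i, hi⟩ else 0,
    Sigma.desc fun j => q j ≫ Sigma.ι xs j, ?_⟩
  rw [Category.assoc]
  congr 1
  ext i
  by_cases hi : i ∈ J
  · simp [hi, hwq ⟨i, hi⟩]
  · simpa [hi] using (htsz i hi).eq_of_src _ _

lemma exists_factor_comp_eq_zero {y : C} (hy : y ∈ compactMapsFactorThrough G A) {c s : C}
    (hc : c ∈ G.compacts) (hs : s ∈ G.compacts) (δ : c ⟶ s) (p : s ⟶ y) (h : δ ≫ p = 0) :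
    ∃ s' ∈ A, ∃ (j : s ⟶ s') (p' : s' ⟶ y), p = j ≫ p' ∧ δ ≫ j = 0 := by
  obtain ⟨k, q, dk, hk⟩ := distinguished_cocone_triangle δ
  obtain ⟨pk, rfl⟩ := Triangle.yoneda_exact₂ _ hk p h
  obtain ⟨s', hs', w, p', rfl⟩ := hy k (G.cone_mem _ hk hc hs) pk
  have hδq : δ ≫ q = 0 := comp_distTriang_mor_zero₁₂ _ hk
  exact ⟨s', hs', q ≫ w, p', (Category.assoc _ _ _).symm, by rw [reassoc_of% hδq, zero_comp]⟩

end compactMapsFactorThrough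

variable {G : AlphaCompactGeneration (C := C) α} {𝒮 : Set C} {x t : C}

lemma HQuot.exists_rep_of_subset (hA𝒮 : A ⊆ 𝒮) (h𝒮 : 𝒮 ⊆ compactMapsFactorThrough G A)
    (hx : x ∈ G.compacts) (q : HQuot 𝒮 x t) :
    ∃ (s' : C) (hs' : s' ∈ 𝒮) (_ : s' ∈ A) (f : x ⟶ s') (g : s' ⟶ t),
      q = Quot.mk _ ⟨s', hs', f, g⟩ := by
  obtain ⟨⟨s, hs, f, g⟩, rfl⟩ := Quot.exists_rep q
  obtain ⟨s', hs', w, p, rfl⟩ := h𝒮 hs x hx f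
  exact ⟨s', hA𝒮 hs', hs', w, p ≫ g,
    Quot.sound ⟨s, hs, 𝟙 s, p, g, Category.comp_id _, Category.id_comp g, rfl⟩⟩

lemma HQuot.small_of_exists_rep (hAK : A ⊆ G.compacts)
    (h𝒮 : ∀ {a b : C}, (a ≅ b) → a ∈ 𝒮 → b ∈ 𝒮)
    (hrep : ∀ q : HQuot 𝒮 x t, ∃ (s' : C) (hs' : s' ∈ 𝒮) (_ : s' ∈ A) (f : x ⟶ s')
      (g : s' ⟶ t), q = Quot.mk _ ⟨s', hs', f, g⟩) :
    Small.{v} (HQuot 𝒮 x t) := by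
  obtain ⟨ι, F, hF⟩ := G.essentiallySmall
  refine small_of_surjective (f := fun a : {a : Σ i, (x ⟶ F i) × (F i ⟶ t) // F a.1 ∈ 𝒮} =>
    Quot.mk _ ⟨F a.1.1, a.2, a.1.2.1, a.1.2.2⟩) fun q => ?_
  obtain ⟨s, hs, hsA, f, g, rfl⟩ := hrep q
  obtain ⟨i, ⟨e⟩⟩ := hF s (hAK hsA)
  exact ⟨⟨⟨i, f ≫ e.hom, e.inv ≫ g⟩, h𝒮 e hs⟩,
    Quot.sound ⟨F i, h𝒮 e hs, 𝟙 _, e.hom, e.inv ≫ g, by simp, by simp, by simp⟩⟩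

lemma HRel_iff_of_subset (hAK : A ⊆ G.compacts) (hA𝒮 : A ⊆ 𝒮)
    (h𝒮 : 𝒮 ⊆ compactMapsFactorThrough G A) (hx : x ∈ G.compacts) (h h' : HTilde 𝒮 x t)
    (hs : h.s ∈ A) (hs' : h'.s ∈ A) :
    HRel 𝒮 h h' ↔ ∃ (s'' : C) (_ : s'' ∈ A) (u : h.s ⟶ s'') (u' : h'.s ⟶ s'') (v : s'' ⟶ t),
      h.f ≫ u = h'.f ≫ u' ∧ u ≫ v = h.g ∧ u' ≫ v = h'.g := by
  refine ⟨fun ⟨s'', hs'', u, u', v, hf, hg, hg'⟩ => ?_,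
    fun ⟨s'', hs'', u, u', v, hv⟩ => ⟨s'', hA𝒮 hs'', u, u', v, hv⟩⟩
  have hsum : (h.s ⊞ h'.s : C) ∈ G.compacts :=
    G.mem_of_distTriang (binaryBiproductTriangle_distinguished _ _) (hAK hs) (hAK hs')
  obtain ⟨s₃, hs₃, j, p, hp, hj⟩ := compactMapsFactorThrough.exists_factor_comp_eq_zero
    (h𝒮 hs'') hx hsum (h.f ≫ biprod.inl - h'.f ≫ biprod.inr) (biprod.desc u u') (by simp [hf])
  refine ⟨s₃, hs₃, biprod.inl ≫ j, biprod.inr ≫ j, p ≫ v, ?_, ?_, ?_⟩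
  · simpa [sub_eq_zero] using hj
  · rw [Category.assoc, reassoc_of% hp.symm, biprod.inl_desc_assoc, hg]
  · rw [Category.assoc, reassoc_of% hp.symm, biprod.inr_desc_assoc, hg']

end

open Triangulated

lemma IsAlphaCocompleteSuspended.mem_of_distTriang_biprod_lift {α : Cardinal.{v}} {A : Set C}
    (hA : IsAlphaCocompleteSuspended α A) {T : Triangle C} (hT : T ∈ distTriang C)
    (h₃ : T.obj₃ ∈ A) {a : C} (ha : a ∈ A) (w : T.obj₁ ⟶ a) {z : C}
    {e : (a ⊞ T.obj₂ : C) ⟶ z} {d : z ⟶ (T.obj₁⟦(1 : ℤ)⟧ : C)}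
    (hz : Triangle.mk (biprod.lift w T.mor₁) e d ∈ distTriang C) : z ∈ A := by
  have hsnd : Triangle.mk (biprod.snd : (a ⊞ T.obj₂ : C) ⟶ T.obj₂) 0
      (-((biprod.inl : a ⟶ (a ⊞ T.obj₂ : C))⟦(1 : ℤ)⟧')) ∈ distTriang C :=
    rot_of_distTriang _ (binaryBiproductTriangle_distinguished a T.obj₂)
  -- the octahedron on `biprod.lift w T.mor₁ ≫ biprod.snd = T.mor₁` gives `z ⟶ T.obj₃ ⟶ a⟦1⟧`
  have oct := someOctahedron (biprod.lift_snd w T.mor₁) hz hsnd hT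
  refine hA.ext_mem _ (inv_rot_of_distTriang _ oct.mem) ?_ h₃
  exact hA.iso_mem ((shiftFunctorCompIsoId C (1 : ℤ) (-1) (by norm_num)).app a).symm ha

namespace compactMapsFactorThrough

variable {α : Cardinal.{v}} {G : AlphaCompactGeneration (C := C) α} {A : Set C}

lemma ext_mem (hA : IsAlphaCocompleteSuspended α A) (hAK : A ⊆ G.compacts) {T : Triangle C}
    (hT : T ∈ distTriang C) (h₁ : T.obj₁ ∈ compactMapsFactorThrough G A)
    (h₃ : T.obj₃ ∈ compactMapsFactorThrough G A) :
    T.obj₂ ∈ compactMapsFactorThrough G A := by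
  intro c hc φ
  obtain ⟨sb, hsb, wb, pb, hb⟩ := h₃ c hc (φ ≫ T.mor₂)
  obtain ⟨k, γ, d, hk⟩ := distinguished_cocone_triangle₁ wb
  have hkc : k ∈ G.compacts :=
    G.mem_of_distTriang (inv_rot_of_distTriang _ hk) (G.shift_mem _ (hAK hsb) (-1)) hc
  have hγ : γ ≫ wb = 0 := comp_distTriang_mor_zero₁₂ _ hk
  obtain ⟨η, hη⟩ := Triangle.coyoneda_exact₂ T hT (γ ≫ φ) (by
    rw [Category.assoc, hb, reassoc_of% hγ, zero_comp])
  obtain ⟨sa, hsa, wa, pa, rfl⟩ := h₁ k hkc η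
  -- `φ` and `pa ≫ T.mor₁` glue to a map out of the cone `z` of `(-wa, γ) : k ⟶ sa ⊞ c`
  obtain ⟨z, e, dz, hz⟩ := distinguished_cocone_triangle (biprod.lift (-wa) γ)
  obtain ⟨pz, hpz⟩ : ∃ pz : z ⟶ T.obj₂, biprod.desc (pa ≫ T.mor₁) φ = e ≫ pz :=
    Triangle.yoneda_exact₂ _ hz _ (by
      change biprod.lift (-wa) γ ≫ _ = 0
      rw [biprod.lift_desc, hη]
      simp)
  refine ⟨z, hA.mem_of_distTriang_biprod_lift hk hsb hsa (-wa) hz, biprod.inr ≫ e, pz, ?_⟩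
  rw [Category.assoc, ← hpz, biprod.inr_desc]

lemma isCocompletePreaisle (hA : IsAlphaCocompleteSuspended α A) (hAK : A ⊆ G.compacts) :
    IsCocompletePreaisle (compactMapsFactorThrough G A) :=
  ⟨⟨of_mem hA.zero_mem, fun _ => shift_mem hA.shift_mem, fun _ hT => ext_mem hA hAK hT,
    fun _ _ hs => summand_mem hs⟩, coprod_mem hA.smallCoprod_mem⟩

end compactMapsFactorThrough

/-- for `𝒮 = ⟨S⟩^{≤0}`, the class `H_𝒮(x,t)` is a small set: choosing a
regular cardinal `α` with `T` α-compactly generated and `S ∪ {x} ⊆ T^α`, every class in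
`H_𝒮(x,t)` is represented by a pair `x ⟶ s' ⟶ t` with `s' ∈ S(α)`, and two such
representatives with middle objects in `S(α)` are equivalent if and only if they can be
connected by a commutative diagram through an object `s'' ∈ S(α)`. -/
theorem statement15 (S : Set C) (x t : C)
    (α : Cardinal.{v}) (hα : α.IsRegular)
    (G : AlphaCompactGeneration (C := C) α)
    (hS : S ⊆ G.compacts) (hx : x ∈ G.compacts) :
    Small.{v} (HQuot (aisleGen S) x t) ∧
    (∀ q : HQuot (aisleGen S) x t,
      ∃ (s' : C) (hs' : s' ∈ aisleGen S) (_ : s' ∈ SAlpha α S) (f : x ⟶ s') (g : s' ⟶ t),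
        q = Quot.mk _ ⟨s', hs', f, g⟩) ∧
    (∀ h h' : HTilde (aisleGen S) x t, h.s ∈ SAlpha α S → h'.s ∈ SAlpha α S →
      (HRel (aisleGen S) h h' ↔
        ∃ (s'' : C) (_ : s'' ∈ SAlpha α S) (u : h.s ⟶ s'') (u' : h'.s ⟶ s'')
          (v : s'' ⟶ t), h.f ≫ u = h'.f ≫ u' ∧ u ≫ v = h.g ∧ u' ≫ v = h'.g)) := by
  have hAK : SAlpha α S ⊆ G.compacts := SAlpha_subset_compacts G hS
  have hfac : aisleGen S ⊆ compactMapsFactorThrough G (SAlpha α S) :=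
    aisleGen_subset
      (compactMapsFactorThrough.isCocompletePreaisle (isAlphaCocompleteSuspended_SAlpha hα S) hAK)
      ((subset_SAlpha hα.aleph0_le).trans fun _ => compactMapsFactorThrough.of_mem)
  have hrep := HQuot.exists_rep_of_subset (t := t) SAlpha_subset_aisleGen hfac hx
  exact ⟨HQuot.small_of_exists_rep hAK (isCocompletePreaisle_aisleGen S).1.mem_of_iso hrep, hrep,
    HRel_iff_of_subset hAK SAlpha_subset_aisleGen hfac hx⟩
end
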